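/- For every real ε with 0 < ε < 1/2 and every real δ > 0, there exist an integer n ≥ 2, nonnegative job sizes d_1 ≤ d_2 ≤ ⋯ ≤ d_n, and an integer k with 1 ≤ k ≤ n−1 such that ε_k = (Σ_{ℓ=1}^k d_ℓ)/D = ε and c(A^k) ≥ (1/(4ε) + 1/2 − δ)·c(A*). Hence the efficacy ratio of ε-fair Pareto schedules is at least 1/(4ε) + 1/2, so the upper bound 1/(4ε) + 1 + ε/4 is tight up to an additive constant. -/

import Mathlib

/-- Expected social cost of the `k`-th Pareto schedule `A^k` (0-indexed). -/
noncomputable def paretoCost {n : ℕ} (d : Fin n → ℝ) (k : ℕ) : ℝ :=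
  ∑ i : Fin n,
    if (i : ℕ) < k then ∑ ℓ ∈ Finset.univ.filter (fun ℓ : Fin n => ℓ ≤ i), d ℓ
    else (∑ ℓ ∈ Finset.univ.filter (fun ℓ : Fin n => (ℓ : ℕ) < k), d ℓ) +
      (((∑ ℓ : Fin n, d ℓ) - ∑ ℓ ∈ Finset.univ.filter (fun ℓ : Fin n => (ℓ : ℕ) < k), d ℓ)
        + d i) / 2

/-- Optimal (Smith's rule) social cost `∑ i (n - i + 1) d_i`, written 0-indexed. -/
noncomputable def smithCost {n : ℕ} (d : Fin n → ℝ) : ℝ :=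
  ∑ i : Fin n, ((n : ℝ) - ((i : ℕ) : ℝ)) * d i

open Finset

/-- The lower-bound instance: `2K` tiny jobs of size `ε/K` followed by one big job of
size `1 - 2ε`; the total size is `1`. -/
noncomputable def dd (ε : ℝ) (K : ℕ) : Fin (2*K+1) → ℝ :=
  fun i => if (i:ℕ) < 2*K then ε/K else 1 - 2*ε

lemma filter_range_lt' (n m : ℕ) (h : m ≤ n) :
    (Finset.range n).filter (fun i => i < m) = Finset.range m := by
  ext i; simp only [mem_filter, mem_range]; omega

lemma sum_range_cast' (m : ℕ) : ∑ i ∈ Finset.range m, (i:ℝ) = m * (m-1) / 2 := by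
  induction m with
  | zero => simp
  | succ p ih => rw [Finset.sum_range_succ, ih]; push_cast; ring

lemma sum_dd_lt (ε : ℝ) (K : ℕ) (hK : 1 ≤ K) :
    ∑ ℓ ∈ Finset.univ.filter (fun ℓ : Fin (2*K+1) => (ℓ:ℕ) < K), dd ε K ℓ = ε := by
  rw [Finset.sum_filter]
  simp only [dd]
  rw [Fin.sum_univ_eq_sum_range (fun j => if j < K then (if j < 2*K then ε/K else 1-2*ε) else 0)]
  have : ∀ j ∈ Finset.range (2*K+1),
      (if j < K then (if j < 2*K then ε/K else 1-2*ε) else 0) = (if j < K then ε/K else 0) := by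
    intro j _; by_cases h : j < K
    · rw [if_pos h, if_pos h, if_pos (by omega)]
    · rw [if_neg h, if_neg h]
  rw [Finset.sum_congr rfl this, ← Finset.sum_filter, filter_range_lt' _ _ (by omega),
    Finset.sum_const, Finset.card_range]
  have hK0 : (K:ℝ) ≠ 0 := by positivity
  rw [nsmul_eq_mul]; field_simp

lemma sum_dd_total (ε : ℝ) (K : ℕ) (hK : 1 ≤ K) : ∑ ℓ : Fin (2*K+1), dd ε K ℓ = 1 := by
  simp only [dd]
  rw [Fin.sum_univ_eq_sum_range (fun j => if j < 2*K then ε/K else 1-2*ε)]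
  rw [Finset.sum_range_succ, if_neg (by omega)]
  have : ∀ j ∈ Finset.range (2*K), (if j < 2*K then ε/K else 1-2*ε) = ε/K := by
    intro j hj; rw [if_pos (Finset.mem_range.mp hj)]
  rw [Finset.sum_congr rfl this, Finset.sum_const, Finset.card_range]
  have hK0 : (K:ℝ) ≠ 0 := by positivity
  rw [nsmul_eq_mul]; push_cast; field_simp; ring

lemma smith_dd (ε : ℝ) (K : ℕ) (hK : 1 ≤ K) :
    smithCost (dd ε K) = 2*ε*K + ε + 1 := by
  unfold smithCost
  simp only [dd]
  rw [Fin.sum_univ_eq_sum_range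
    (fun j => (((2*K+1:ℕ):ℝ) - (j:ℝ)) * (if j < 2*K then ε/K else 1-2*ε))]
  rw [Finset.sum_range_succ, if_neg (by omega)]
  have : ∀ j ∈ Finset.range (2*K),
      (((2*K+1:ℕ):ℝ) - (j:ℝ)) * (if j < 2*K then ε/K else 1-2*ε)
        = ((2*K+1:ℝ)) * (ε/K) - (j:ℝ) * (ε/K) := by
    intro j hj; rw [if_pos (Finset.mem_range.mp hj)]; push_cast; ring
  rw [Finset.sum_congr rfl this, Finset.sum_sub_distrib, Finset.sum_const, Finset.card_range,
    ← Finset.sum_mul, sum_range_cast']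
  have hK0 : (K:ℝ) ≠ 0 := by positivity
  rw [nsmul_eq_mul]
  push_cast
  field_simp
  ring

lemma prefix_dd (ε : ℝ) (K : ℕ) (hK : 1 ≤ K) (i : Fin (2*K+1)) (hi : (i:ℕ) < K) :
    ∑ ℓ ∈ Finset.univ.filter (fun ℓ : Fin (2*K+1) => ℓ ≤ i), dd ε K ℓ
      = (((i:ℕ):ℝ)+1) * (ε/K) := by
  rw [Finset.sum_filter]
  have h1 : ∀ ℓ : Fin (2*K+1),
      (if ℓ ≤ i then dd ε K ℓ else 0) = (if (ℓ:ℕ) < (i:ℕ)+1 then ε/K else 0) := by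
    intro ℓ
    by_cases h : ℓ ≤ i
    · have hv : (ℓ:ℕ) ≤ (i:ℕ) := h
      rw [if_pos h, if_pos (by omega)]
      simp only [dd]; rw [if_pos (by omega)]
    · have hv : ¬ (ℓ:ℕ) ≤ (i:ℕ) := fun hh => h (by exact hh)
      rw [if_neg h, if_neg (by omega)]
  simp only [h1]
  rw [Fin.sum_univ_eq_sum_range (fun j => if j < (i:ℕ)+1 then ε/K else 0)]
  rw [← Finset.sum_filter, filter_range_lt' _ _ (by omega), Finset.sum_const,
    Finset.card_range]
  push_cast; ring

lemma pareto_dd (ε : ℝ) (K : ℕ) (hK : 1 ≤ K) :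
    paretoCost (dd ε K) K = ((K:ℝ)*(1+2*ε) + ε + 2)/2 := by
  unfold paretoCost
  rw [sum_dd_lt ε K hK, sum_dd_total ε K hK]
  have step1 : ∀ i : Fin (2*K+1), (i ∈ Finset.univ) →
      (if (i:ℕ) < K then ∑ ℓ ∈ Finset.univ.filter (fun ℓ : Fin (2*K+1) => ℓ ≤ i), dd ε K ℓ
        else ε + ((1 - ε) + dd ε K i)/2)
      = (if (i:ℕ) < K then (((i:ℕ):ℝ)+1) * (ε/K)
        else ε + ((1 - ε) + (if (i:ℕ) < 2*K then ε/K else 1-2*ε))/2) := by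
    intro i _
    by_cases hi : (i:ℕ) < K
    · rw [if_pos hi, if_pos hi, prefix_dd ε K hK i hi]
    · rw [if_neg hi, if_neg hi]; rfl
  rw [Finset.sum_congr rfl step1]
  rw [Fin.sum_univ_eq_sum_range (fun j => if j < K then ((j:ℝ)+1) * (ε/K)
        else ε + ((1 - ε) + (if j < 2*K then ε/K else 1-2*ε))/2)]
  rw [Finset.sum_range_succ, if_neg (by omega), if_neg (by omega)]
  have step2 : ∀ j ∈ Finset.range (2*K),
      (if j < K then ((j:ℝ)+1) * (ε/K)
        else ε + ((1 - ε) + (if j < 2*K then ε/K else 1-2*ε))/2)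
      = (if j < K then ((j:ℝ)+1) * (ε/K) else ε + ((1 - ε) + ε/K)/2) := by
    intro j hj
    by_cases h : j < K
    · rw [if_pos h, if_pos h]
    · rw [if_neg h, if_neg h, if_pos (Finset.mem_range.mp hj)]
  rw [Finset.sum_congr rfl step2, Finset.sum_ite]
  rw [filter_range_lt' _ _ (by omega)]
  have hIco : (Finset.range (2*K)).filter (fun j => ¬ j < K) = Finset.Ico K (2*K) := by
    ext j; simp only [mem_filter, mem_range, mem_Ico]; omega
  rw [hIco, Finset.sum_const, Nat.card_Ico]
  have : ∑ j ∈ Finset.range K, ((j:ℝ)+1) * (ε/K)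
      = (∑ j ∈ Finset.range K, (j:ℝ) + K) * (ε/K) := by
    rw [← Finset.sum_mul, Finset.sum_add_distrib, Finset.sum_const, Finset.card_range]
    simp
  rw [this, sum_range_cast']
  have hK0 : (K:ℝ) ≠ 0 := by positivity
  have h2K : ((2*K - K : ℕ):ℝ) = (K:ℝ) := by
    have : 2*K - K = K := by omega
    rw [this]
  rw [nsmul_eq_mul, h2K]
  field_simp
  ring

theorem pareto_schedule_efficacy_lower (ε δ : ℝ)
    (hε0 : 0 < ε) (hε1 : ε < 1 / 2) (hδ : 0 < δ) :
    ∃ (n : ℕ) (d : Fin n → ℝ) (k : ℕ),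
      2 ≤ n ∧ (∀ i, 0 ≤ d i) ∧ Monotone d ∧ 1 ≤ k ∧ k ≤ n - 1 ∧
      (∑ ℓ ∈ Finset.univ.filter (fun ℓ : Fin n => (ℓ : ℕ) < k), d ℓ) /
        (∑ ℓ : Fin n, d ℓ) = ε ∧
      (1 / (4 * ε) + 1 / 2 - δ) * smithCost d ≤ paretoCost d k := by
  have h12 : 0 < 1 - 2*ε := by linarith
  have hxpos : 0 < 1/(δ*ε^2) + ε/(1-2*ε) := by positivity
  set K : ℕ := ⌈1/(δ*ε^2) + ε/(1-2*ε)⌉₊ with hKdef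
  have hK : 1 ≤ K := Nat.one_le_iff_ne_zero.mpr (by
    have := Nat.ceil_pos.mpr hxpos
    omega)
  have hxK : 1/(δ*ε^2) + ε/(1-2*ε) ≤ (K:ℝ) := Nat.le_ceil _
  have hKpos : (0:ℝ) < K := by
    have : (1:ℝ) ≤ (K:ℝ) := by exact_mod_cast hK
    linarith
  have hKa : 1/(δ*ε^2) ≤ (K:ℝ) := by
    have h2 : 0 ≤ ε/(1-2*ε) := by positivity
    linarith
  have hKb : ε/(1-2*ε) ≤ (K:ℝ) := by
    have h2 : 0 ≤ 1/(δ*ε^2) := by positivity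
    linarith
  have h1 : 1 ≤ δ * ε^2 * K := by
    rw [div_le_iff₀ (by positivity)] at hKa
    nlinarith
  have hab : ε/K ≤ 1 - 2*ε := by
    rw [div_le_iff₀ h12] at hKb
    rw [div_le_iff₀ hKpos]
    linarith
  refine ⟨2*K+1, dd ε K, K, by omega, ?_, ?_, hK, by omega, ?_, ?_⟩
  · intro i
    simp only [dd]
    split_ifs
    · positivity
    · linarith
  · intro i j hij
    have hij' : (i:ℕ) ≤ (j:ℕ) := hij
    simp only [dd]
    split_ifs with hI hJ hJ'
    · exact le_rfl
    · exact hab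
    · omega
    · exact le_rfl
  · rw [sum_dd_lt ε K hK, sum_dd_total ε K hK, div_one]
  · rw [smith_dd ε K hK, pareto_dd ε K hK]
    have hK1 : (1:ℝ) ≤ (K:ℝ) := by exact_mod_cast hK
    have h4 : (0:ℝ) < 4*ε := by linarith
    have main : (1+2*ε-4*ε*δ)*(2*ε*K+ε+1) ≤ 2*ε*((K:ℝ)*(1+2*ε)+ε+2) := by
      nlinarith [h1, mul_pos hδ hε0, mul_pos (mul_pos hδ hε0) hε0,
        mul_nonneg (mul_nonneg hδ.le hε0.le) hε0.le]
    calc (1 / (4 * ε) + 1 / 2 - δ) * (2*ε*K + ε + 1)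
        = ((1+2*ε-4*ε*δ)*(2*ε*K+ε+1))/(4*ε) := by field_simp; ring
      _ ≤ (2*ε*((K:ℝ)*(1+2*ε)+ε+2))/(4*ε) := div_le_div_of_nonneg_right main h4.le
      _ = ((K:ℝ)*(1+2*ε) + ε + 2)/2 := by field_simp; ring
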